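/- Let A, B, C, D, E, F ∈ ℝ⁴ with B − A = h·e₄, h > 0. For X ∈ {C, D, E, F} let f_X : ℝ³ → ℝ be given by f_X(v₁,v₂,v₃) = S_{ABX}((v₁,v₂,v₃,0))², the squared deviated area of triangle ABX. Then for any three distinct letters X, Y, Z ∈ {C, D, E, F} with complementary letter W, the quantity |det of the Jacobian at 0 of the map v ↦ (f_X(v), f_Y(v), f_Z(v))| divided by |V(A,B,X,Y,Z)| (when V(A,B,X,Y,Z) ≠ 0) is the same for all such choices; equivalently, |det Jac(f_C,f_D,f_E)(0)| · |V(A,B,C,D,F)| = |det Jac(f_C,f_D,f_F)(0)| · |V(A,B,C,D,E)|, and similarly for all permutations of C, D, E, F. -/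

import Mathlib

/-- Area of the triangle with vertices `P`, `Q`, `R`. -/
noncomputable def triArea {n : ℕ} (P Q R : EuclideanSpace ℝ (Fin n)) : ℝ :=
  (1/2) * Real.sqrt (‖Q - P‖^2 * ‖R - P‖^2 - (inner ℝ (Q - P) (R - P) : ℝ)^2)

/-- Midpoint of two points. -/
noncomputable def mid {n : ℕ} (P Q : EuclideanSpace ℝ (Fin n)) : EuclideanSpace ℝ (Fin n) :=
  (1/2 : ℝ) • (P + Q)

/-- Orthogonal projection ℝ⁴ → ℝ³ onto the first three coordinates. -/
noncomputable def proj (x : EuclideanSpace ℝ (Fin 4)) : EuclideanSpace ℝ (Fin 3) :=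
  (WithLp.equiv 2 (Fin 3 → ℝ)).symm fun i => x i.castSucc

/-- Inclusion ℝ³ → ℝ⁴, (v₁,v₂,v₃) ↦ (v₁,v₂,v₃,0). -/
noncomputable def lift (v : EuclideanSpace ℝ (Fin 3)) : EuclideanSpace ℝ (Fin 4) :=
  (WithLp.equiv 2 (Fin 4 → ℝ)).symm (Fin.snoc (WithLp.equiv 2 (Fin 3 → ℝ) v) 0)

/-- Signed volume of the 4-simplex `P₀P₁P₂P₃P₄`. -/
noncomputable def vol4 (P₀ P₁ P₂ P₃ P₄ : EuclideanSpace ℝ (Fin 4)) : ℝ :=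
  (1/24) * Matrix.det (Matrix.of fun i j => ![P₁ - P₀, P₂ - P₀, P₃ - P₀, P₄ - P₀] j i)

/-- Unsigned volume of the tetrahedron `Q₀Q₁Q₂Q₃` in ℝ³. -/
noncomputable def vol3 (Q₀ Q₁ Q₂ Q₃ : EuclideanSpace ℝ (Fin 3)) : ℝ :=
  (1/6) * |Matrix.det (Matrix.of fun i j => ![Q₁ - Q₀, Q₂ - Q₀, Q₃ - Q₀] j i)|

/-- Deviated area of triangle ABX for a deviation v of edge AB. -/
noncomputable def devArea (A B X v : EuclideanSpace ℝ (Fin 4)) : ℝ :=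
  4 * triArea (mid B X) (mid X A) (mid A B + v)

/-- Determinant of the Jacobian matrix at 0 of a map ℝ³ → ℝ³. -/
noncomputable def jacDet (f : EuclideanSpace ℝ (Fin 3) → (Fin 3 → ℝ)) : ℝ :=
  Matrix.det (Matrix.of fun i j => fderiv ℝ f 0 (EuclideanSpace.single j 1) i)


section Aux

lemma devArea_sq' (A B X : EuclideanSpace ℝ (Fin 4)) (h : ℝ)
    (hAB : B - A = h • EuclideanSpace.single (3 : Fin 4) (1 : ℝ))
    (v : EuclideanSpace ℝ (Fin 3)) :
    devArea A B X (lift v) ^ 2 = h^2 * ∑ i : Fin 3, ((A - X) i.castSucc / 2 + v i)^2 := by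
  have hu : mid X A - mid B X = (-(h/2)) • EuclideanSpace.single (3 : Fin 4) (1 : ℝ) := by
    have h1 : mid X A - mid B X = (-(1/2) : ℝ) • (B - A) := by unfold mid; module
    rw [h1, hAB, smul_smul]; congr 1; ring
  set w : EuclideanSpace ℝ (Fin 4) := mid A B + lift v - mid B X with hw
  have hwc : ∀ i : Fin 4, w i = (A - X) i / 2 + lift v i := by
    intro i
    simp only [hw, mid, PiLp.add_apply, PiLp.sub_apply, PiLp.smul_apply, smul_eq_mul]
    ring
  have hw3 : w 3 = (A - X) 3 / 2 := by
    rw [hwc]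
    have h3 : (3 : Fin 4) = Fin.last 3 := rfl
    simp [lift, h3, Fin.snoc_last]
    rw [h3, Fin.snoc_last]
  have hwcs : ∀ i : Fin 3, w i.castSucc = (A - X) i.castSucc / 2 + v i := by
    intro i; rw [hwc]; simp [lift, Fin.snoc_castSucc]
  have hnormu : ‖mid X A - mid B X‖^2 = h^2/4 := by
    rw [hu, norm_smul]
    simp [EuclideanSpace.norm_single, Real.norm_eq_abs, mul_pow]
    rw [div_pow, sq_abs]; ring
  have hinner : (inner ℝ (mid X A - mid B X) w : ℝ) = -(h/2) * w 3 := by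
    rw [hu, real_inner_smul_left, EuclideanSpace.inner_single_left]
    simp
  have hnormw : ‖w‖^2 = ∑ i : Fin 4, (w i)^2 := by
    rw [EuclideanSpace.norm_eq, Real.sq_sqrt (by positivity)]
    simp [Real.norm_eq_abs, sq_abs]
  have hEx : ‖mid X A - mid B X‖^2 * ‖w‖^2 - (inner ℝ (mid X A - mid B X) w : ℝ)^2
      = h^2/4 * ∑ i : Fin 3, (w i.castSucc)^2 := by
    rw [hnormu, hinner, hnormw, Fin.sum_univ_castSucc]
    have h3 : Fin.last 3 = (3 : Fin 4) := rfl
    rw [h3]; ring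
  have hnn : (0:ℝ) ≤ h^2/4 * ∑ i : Fin 3, (w i.castSucc)^2 := by positivity
  unfold devArea triArea
  rw [← hw]
  rw [mul_pow, mul_pow, Real.sq_sqrt (by rw [hEx]; exact hnn), hEx]
  simp only [hwcs, ← Finset.mul_sum]
  ring

lemma key_fderiv' (c : Fin 3 → ℝ) (a : ℝ) (j : Fin 3) :
    fderiv ℝ (fun v : EuclideanSpace ℝ (Fin 3) => a * ∑ k : Fin 3, (c k + v k)^2) 0
      (EuclideanSpace.single j 1) = a * (2 * c j) := by
  have hterm : ∀ k : Fin 3, HasFDerivAt (fun v : EuclideanSpace ℝ (Fin 3) => (c k + v k)^2)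
      ((2 * (c k + (0 : EuclideanSpace ℝ (Fin 3)) k)) •
        (EuclideanSpace.proj k : EuclideanSpace ℝ (Fin 3) →L[ℝ] ℝ)) 0 := by
    intro k
    have hg : HasFDerivAt (fun v : EuclideanSpace ℝ (Fin 3) => c k + v k)
        (EuclideanSpace.proj k : EuclideanSpace ℝ (Fin 3) →L[ℝ] ℝ) 0 :=
      ((EuclideanSpace.proj k : EuclideanSpace ℝ (Fin 3) →L[ℝ] ℝ).hasFDerivAt).const_add (c k)
    have := hg.mul hg
    have h2 : (fun v : EuclideanSpace ℝ (Fin 3) => (c k + v k)^2)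
        = fun v : EuclideanSpace ℝ (Fin 3) => (c k + v k) * (c k + v k) := by
      funext v; ring
    rw [h2]
    rw [two_mul, add_smul]
    exact this
  have hsum : HasFDerivAt (fun v : EuclideanSpace ℝ (Fin 3) => a * ∑ k : Fin 3, (c k + v k)^2)
      (a • ∑ k : Fin 3, (2 * (c k + (0 : EuclideanSpace ℝ (Fin 3)) k)) •
        (EuclideanSpace.proj k : EuclideanSpace ℝ (Fin 3) →L[ℝ] ℝ)) 0 :=
    (HasFDerivAt.fun_sum fun k _ => hterm k).const_mul a
  rw [hsum.fderiv]
  simp [ContinuousLinearMap.sum_apply, EuclideanSpace.single_apply, mul_ite,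
    Finset.sum_ite_eq', smul_eq_mul]

lemma key_diff' (c : Fin 3 → ℝ) (a : ℝ) :
    DifferentiableAt ℝ (fun v : EuclideanSpace ℝ (Fin 3) => a * ∑ k : Fin 3, (c k + v k)^2) 0 := by
  apply DifferentiableAt.const_mul
  apply DifferentiableAt.fun_sum
  intro k _
  exact (((EuclideanSpace.proj k :
    EuclideanSpace ℝ (Fin 3) →L[ℝ] ℝ).differentiable.differentiableAt).const_add (c k)).pow 2

lemma abs_jacDet_eq' (A B : EuclideanSpace ℝ (Fin 4)) (h : ℝ)
    (hAB : B - A = h • EuclideanSpace.single (3 : Fin 4) (1 : ℝ))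
    (P : Fin 3 → EuclideanSpace ℝ (Fin 4)) :
    |jacDet (fun v i => devArea A B (P i) (lift v) ^ 2)| =
      h^6 * |Matrix.det (Matrix.of fun i j : Fin 3 => (P i - A) j.castSucc)| := by
  have hfun : (fun v (i : Fin 3) => devArea A B (P i) (lift v) ^ 2)
      = fun v i => h^2 * ∑ k : Fin 3, ((A - P i) k.castSucc / 2 + v k)^2 := by
    funext v i; exact devArea_sq' A B (P i) h hAB v
  rw [hfun]
  unfold jacDet
  rw [fderiv_pi (fun i => key_diff' (fun k => (A - P i) k.castSucc / 2) (h^2))]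
  simp only [ContinuousLinearMap.pi_apply]
  have hent : (Matrix.of fun i j : Fin 3 =>
      fderiv ℝ (fun v : EuclideanSpace ℝ (Fin 3) =>
        h^2 * ∑ k : Fin 3, ((A - P i) k.castSucc / 2 + v k)^2) 0
        (EuclideanSpace.single j 1))
      = (-(h^2)) • (Matrix.of fun i j : Fin 3 => (P i - A) j.castSucc) := by
    ext i j
    rw [Matrix.of_apply, key_fderiv']
    simp only [Matrix.smul_apply, Matrix.of_apply, PiLp.sub_apply, smul_eq_mul]
    ring
  rw [hent, Matrix.det_smul]
  rw [abs_mul, abs_pow, abs_neg, abs_of_nonneg (sq_nonneg h)]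
  norm_num [← pow_mul]

lemma abs_vol4_eq' (A B : EuclideanSpace ℝ (Fin 4)) (h : ℝ) (hh : 0 < h)
    (hAB : B - A = h • EuclideanSpace.single (3 : Fin 4) (1 : ℝ))
    (P : Fin 3 → EuclideanSpace ℝ (Fin 4)) :
    |vol4 A B (P 0) (P 1) (P 2)| =
      h/24 * |Matrix.det (Matrix.of fun i j : Fin 3 => (P i - A) j.castSucc)| := by
  unfold vol4
  set M : Matrix (Fin 4) (Fin 4) ℝ :=
    Matrix.of fun i j => ![B - A, P 0 - A, P 1 - A, P 2 - A] j i with hM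
  have hcol : ∀ i : Fin 4, M i 0 = if i = 3 then h else 0 := by
    intro i
    simp only [hM, Matrix.of_apply, Matrix.cons_val_zero, hAB, PiLp.smul_apply,
      EuclideanSpace.single_apply, smul_eq_mul, mul_ite, mul_one, mul_zero]
  have hsub : M.submatrix (Fin.succAbove 3) Fin.succ
      = Matrix.transpose (Matrix.of fun i j : Fin 3 => (P i - A) j.castSucc) := by
    ext i j
    have h3 : (3 : Fin 4) = Fin.last 3 := rfl
    simp only [Matrix.submatrix_apply, h3, Fin.succAbove_last, Matrix.transpose_apply,
      Matrix.of_apply, hM]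
    fin_cases j <;> simp
  have hdet : M.det = -(h * Matrix.det (Matrix.of fun i j : Fin 3 => (P i - A) j.castSucc)) := by
    rw [show M.det = ∑ i : Fin 4, (-1)^(i:ℕ) * M i 0 * (M.submatrix i.succAbove Fin.succ).det from
      Matrix.det_succ_column_zero M]
    rw [Fin.sum_univ_four, hsub, Matrix.det_transpose]
    simp only [hcol]
    rw [if_neg (by decide : ¬ ((0:Fin 4) = 3)), if_neg (by decide : ¬ ((1:Fin 4) = 3)),
      if_neg (by decide : ¬ ((2:Fin 4) = 3)), show ((3:Fin 4) : ℕ) = 3 from rfl]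
    simp only [if_true]
    ring
  rw [hdet, abs_mul, abs_neg, abs_mul, abs_of_nonneg hh.le,
    abs_of_nonneg (by norm_num : (0:ℝ) ≤ 1/24)]
  ring

end Aux

/-- with B − A = h·e₄, h > 0, and four points X 0, X 1, X 2, X 3
(the letters C, D, E, F), for any two injective choices g₁, g₂ of three of the four
letters, |det Jac (f_{X g₁ 0}, f_{X g₁ 1}, f_{X g₁ 2})(0)| · |V(A,B,X g₂ 0,X g₂ 1,X g₂ 2)|
 = |det Jac (f_{X g₂ 0}, f_{X g₂ 1}, f_{X g₂ 2})(0)| · |V(A,B,X g₁ 0,X g₁ 1,X g₁ 2)|,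
i.e. the ratio |dS²∧dS²∧dS² / V| is invariant under permutations of C, D, E, F. -/
theorem deviation_jacobian_permutation_invariance
    (A B : EuclideanSpace ℝ (Fin 4)) (h : ℝ) (hh : 0 < h)
    (hAB : B - A = h • EuclideanSpace.single (3 : Fin 4) (1 : ℝ))
    (X : Fin 4 → EuclideanSpace ℝ (Fin 4))
    (g₁ g₂ : Fin 3 → Fin 4)
    (hg₁ : Function.Injective g₁) (hg₂ : Function.Injective g₂) :
    |jacDet (fun v => fun i => devArea A B (X (g₁ i)) (lift v) ^ 2)| *
        |vol4 A B (X (g₂ 0)) (X (g₂ 1)) (X (g₂ 2))| =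
      |jacDet (fun v => fun i => devArea A B (X (g₂ i)) (lift v) ^ 2)| *
        |vol4 A B (X (g₁ 0)) (X (g₁ 1)) (X (g₁ 2))| := by
  have e1 := abs_jacDet_eq' A B h hAB (fun i => X (g₁ i))
  have e2 := abs_jacDet_eq' A B h hAB (fun i => X (g₂ i))
  have f1 := abs_vol4_eq' A B h hh hAB (fun i => X (g₁ i))
  have f2 := abs_vol4_eq' A B h hh hAB (fun i => X (g₂ i))
  simp only [] at e1 e2 f1 f2
  rw [e1, e2, f1, f2]
  ring
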